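/- arXiv:0802.4255 — 2 statements merged into one kernel-verified Lean document; each statement's English description precedes it below -/
import Mathlib

section
/- Let s be a complex number with 0 ≤ Re(s) ≤ 1, let B ≥ 1 be a natural number, and let 0 < x₀ ≤ x. Define R_B(x,x₀) = (1/B!) ∫_{x₀}^x (∫_1^∞ e^{-uy} y^B dy)(x-u)^B du. Then R_B(x,x₀) + R_{B-1}(x,x₀) = ((x/x₀ - 1)^B / B!) · Γ(B, x₀), and consequently R_B(x,x₀) ≤ ((x/x₀ - 1)^B / B!) · Γ(B, x₀). -/
set_option maxHeartbeats 1000000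

open MeasureTheory Real intervalIntegral

/-- Upper incomplete gamma function at a positive integer: `Γ(B,x₀) = ∫_{x₀}^∞ e^{-y} y^{B-1} dy`. -/
noncomputable def Gammainc (B : ℕ) (x₀ : ℝ) : ℝ :=
  ∫ y in Set.Ioi x₀, Real.exp (-y) * y ^ (B - 1)

/-- Taylor remainder bound `R_B(x,x₀) = (1/B!) ∫_{x₀}^x (∫_1^∞ e^{-uy} y^B dy)(x-u)^B du`. -/
noncomputable def R (B : ℕ) (x x₀ : ℝ) : ℝ :=
  (1 / (B.factorial : ℝ)) *
    ∫ u in x₀..x, (∫ y in Set.Ioi (1 : ℝ), Real.exp (-(u * y)) * y ^ B) * (x - u) ^ B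

noncomputable def gg (B : ℕ) (u : ℝ) : ℝ :=
  ∫ y in Set.Ioi (1 : ℝ), Real.exp (-(u * y)) * y ^ B

lemma integ {c : ℝ} (hc : 0 < c) (n : ℕ) :
    IntegrableOn (fun y => Real.exp (-(c * y)) * y ^ n) (Set.Ioi 1) := by
  have h0 : IntegrableOn (fun t : ℝ => Real.exp (-t) * t ^ n) (Set.Ioi 0) := by
    have := Real.GammaIntegral_convergent (s := n + 1) (by positivity)
    refine this.congr_fun (fun t ht => ?_) measurableSet_Ioi
    simp only [add_sub_cancel_right, Real.rpow_natCast]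
  have h1 : IntegrableOn (fun y : ℝ => Real.exp (-(c * y)) * (c * y) ^ n) (Set.Ioi 1) := by
    rw [integrableOn_Ioi_comp_mul_left_iff (fun t => Real.exp (-t) * t ^ n) 1 hc]
    exact h0.mono_set (Set.Ioi_subset_Ioi (by positivity))
  have h2 : IntegrableOn (fun y : ℝ => (c ^ n)⁻¹ * (Real.exp (-(c * y)) * (c * y) ^ n))
      (Set.Ioi 1) := h1.smul (c ^ n)⁻¹
  refine h2.congr_fun (fun y hy => ?_) measurableSet_Ioi
  simp only [mul_pow]
  field_simp

lemma gg_measurable (B : ℕ) (v : ℝ) :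
    AEStronglyMeasurable (fun y => Real.exp (-(v * y)) * y ^ B) (volume.restrict (Set.Ioi 1)) :=
  Continuous.aestronglyMeasurable (by fun_prop)

lemma gg_nonneg (B : ℕ) (u : ℝ) : 0 ≤ gg B u := by
  refine setIntegral_nonneg measurableSet_Ioi fun y hy => ?_
  have : (0:ℝ) ≤ y := by have : (1:ℝ) < y := hy; linarith
  positivity

lemma gg_hasDerivAt (B : ℕ) {u : ℝ} (hu : 0 < u) :
    HasDerivAt (gg B) (-(gg (B + 1) u)) u := by
  have key := _root_.hasDerivAt_integral_of_dominated_loc_of_deriv_le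
    (μ := volume.restrict (Set.Ioi (1:ℝ))) (𝕜 := ℝ)
    (F := fun v y => Real.exp (-(v * y)) * y ^ B)
    (F' := fun v y => -(Real.exp (-(v * y)) * y ^ (B + 1)))
    (x₀ := u) (bound := fun y => Real.exp (-(u / 2 * y)) * y ^ (B + 1))
    (s := Metric.ball u (u/2)) (Metric.ball_mem_nhds u (by linarith : (0:ℝ) < u/2))
    ?_ ?_ ?_ ?_ ?_ ?_
  · have h3 : (∫ y in Set.Ioi (1:ℝ), -(Real.exp (-(u * y)) * y ^ (B + 1))) = -(gg (B+1) u) := by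
      rw [MeasureTheory.integral_neg]; rfl
    rw [h3] at key
    exact key.2
  · exact Filter.Eventually.of_forall fun v => gg_measurable B v
  · exact integ hu B
  · exact (gg_measurable (B+1) u).neg
  · refine (ae_restrict_iff' measurableSet_Ioi).2 (Filter.Eventually.of_forall fun y hy => ?_)
    intro v hv
    have hy1 : (1:ℝ) ≤ y := le_of_lt hy
    have hy0 : (0:ℝ) ≤ y := by linarith
    have hv2 : u / 2 ≤ v := by
      rw [Metric.mem_ball, Real.dist_eq, abs_lt] at hv
      linarith [hv.1]
    rw [norm_neg, norm_mul, norm_pow, Real.norm_eq_abs, Real.norm_eq_abs,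
      abs_of_nonneg (Real.exp_pos _).le, abs_of_nonneg hy0]
    exact mul_le_mul_of_nonneg_right (Real.exp_le_exp.2 (by nlinarith)) (pow_nonneg hy0 _)
  · exact integ (by linarith : (0:ℝ) < u/2) (B + 1)
  · refine (ae_restrict_iff' measurableSet_Ioi).2 (Filter.Eventually.of_forall fun y hy => ?_)
    intro v hv
    have h1 : HasDerivAt (fun w : ℝ => -(w * y)) (-y) v := by
      simpa [Pi.neg_def] using ((hasDerivAt_id v).mul_const y).neg
    have h2 : HasDerivAt (fun w : ℝ => Real.exp (-(w * y))) (Real.exp (-(v * y)) * (-y)) v :=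
      (Real.hasDerivAt_exp _).comp v h1
    have h4 := h2.mul_const (y ^ B)
    convert h4 using 1
    · rfl
    · ring

lemma gg_continuousOn (B : ℕ) : ContinuousOn (gg B) (Set.Ioi 0) := fun u hu =>
  (gg_hasDerivAt B hu).continuousAt.continuousWithinAt

lemma gammainc_eq (n : ℕ) {x₀ : ℝ} (hx₀ : 0 < x₀) :
    Gammainc (n + 1) x₀ = x₀ ^ (n + 1) * gg n x₀ := by
  have key := MeasureTheory.integral_comp_mul_left_Ioi
    (fun t : ℝ => Real.exp (-t) * t ^ n) 1 hx₀
  have h1 : (∫ y in Set.Ioi (1:ℝ), Real.exp (-(x₀ * y)) * (x₀ * y) ^ n)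
      = x₀⁻¹ * ∫ t in Set.Ioi x₀, Real.exp (-t) * t ^ n := by
    simpa [mul_one] using key
  have h2 : (∫ y in Set.Ioi (1:ℝ), Real.exp (-(x₀ * y)) * (x₀ * y) ^ n)
      = x₀ ^ n * gg n x₀ := by
    rw [gg, ← MeasureTheory.integral_const_mul]
    congr 1 with y
    ring
  have h3 : Gammainc (n + 1) x₀ = ∫ t in Set.Ioi x₀, Real.exp (-t) * t ^ n := by
    simp [Gammainc]
  rw [h3]
  have hne : x₀ ≠ 0 := hx₀.ne'
  rw [h2] at h1
  field_simp at h1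
  rw [← h1, pow_succ]
  ring

lemma ibp (n : ℕ) {x₀ x : ℝ} (hx₀ : 0 < x₀) (hx : x₀ ≤ x) :
    (∫ u in x₀..x, gg (n + 1) u * (x - u) ^ (n + 1))
      = gg n x₀ * (x - x₀) ^ (n + 1)
        - (n + 1) * ∫ u in x₀..x, gg n u * (x - u) ^ n := by
  have hIcc : Set.uIcc x₀ x = Set.Icc x₀ x := Set.uIcc_of_le hx
  have hsub : Set.Icc x₀ x ⊆ Set.Ioi 0 := fun u hu => lt_of_lt_of_le hx₀ hu.1
  have hderiv : ∀ u ∈ Set.uIcc x₀ x,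
      HasDerivAt (fun u => gg n u * (x - u) ^ (n + 1))
        (-(gg (n + 1) u) * (x - u) ^ (n + 1)
          + gg n u * (((n:ℝ) + 1) * (x - u) ^ n * (-1))) u := by
    intro u hu
    rw [hIcc] at hu
    have hu0 : 0 < u := hsub hu
    have h1 := gg_hasDerivAt n hu0
    have h2 : HasDerivAt (fun u : ℝ => (x - u) ^ (n + 1))
        (((n:ℝ) + 1) * (x - u) ^ n * (-1)) u := by
      have hb : HasDerivAt (fun u : ℝ => x - u) (-1) u := by
        simpa using (hasDerivAt_id u).const_sub x
      have := hb.pow (n + 1)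
      simpa [Nat.add_sub_cancel, Pi.pow_def] using this
    simpa [Pi.mul_def] using h1.mul h2
  have hcontA : ContinuousOn (fun u => -(gg (n + 1) u) * (x - u) ^ (n + 1)) (Set.uIcc x₀ x) := by
    rw [hIcc]
    exact (((gg_continuousOn (n+1)).mono hsub).neg).mul
      (((continuous_const.sub continuous_id).pow (n+1)).continuousOn)
  have hcontB : ContinuousOn (fun u => gg n u * (((n:ℝ) + 1) * (x - u) ^ n * (-1)))
      (Set.uIcc x₀ x) := by
    rw [hIcc]
    exact ((gg_continuousOn n).mono hsub).mul
      (((continuous_const.mul ((continuous_const.sub continuous_id).pow n)).mul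
        continuous_const).continuousOn)
  have hintA : IntervalIntegrable (fun u => -(gg (n + 1) u) * (x - u) ^ (n + 1)) volume x₀ x :=
    hcontA.intervalIntegrable
  have hintB : IntervalIntegrable
      (fun u => gg n u * (((n:ℝ) + 1) * (x - u) ^ n * (-1))) volume x₀ x :=
    hcontB.intervalIntegrable
  have key := intervalIntegral.integral_eq_sub_of_hasDerivAt hderiv (hintA.add hintB)
  rw [intervalIntegral.integral_add hintA hintB] at key
  have hz : gg n x * (x - x) ^ (n + 1) = 0 := by simp
  have e1 : (∫ u in x₀..x, -(gg (n + 1) u) * (x - u) ^ (n + 1))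
      = -∫ u in x₀..x, gg (n + 1) u * (x - u) ^ (n + 1) := by
    rw [← intervalIntegral.integral_neg]
    congr 1 with u
    ring
  have e2 : (∫ u in x₀..x, gg n u * (((n:ℝ) + 1) * (x - u) ^ n * (-1)))
      = -(((n:ℝ) + 1) * ∫ u in x₀..x, gg n u * (x - u) ^ n) := by
    rw [← intervalIntegral.integral_const_mul, ← intervalIntegral.integral_neg]
    congr 1 with u
    ring
  rw [e1, e2, hz] at key
  push_cast
  linarith [key]

/-- `R_B + R_{B-1} = ((x/x₀-1)^B/B!) Γ(B,x₀)`, hence `R_B ≤ ((x/x₀-1)^B/B!) Γ(B,x₀)`. -/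
theorem stmt_3 (s : ℂ) (hs0 : 0 ≤ s.re) (hs1 : s.re ≤ 1) (B : ℕ) (hB : 1 ≤ B)
    (x₀ x : ℝ) (hx₀ : 0 < x₀) (hx : x₀ ≤ x) :
    R B x x₀ + R (B - 1) x x₀ = ((x / x₀ - 1) ^ B / (B.factorial : ℝ)) * Gammainc B x₀ ∧
    R B x x₀ ≤ ((x / x₀ - 1) ^ B / (B.factorial : ℝ)) * Gammainc B x₀ := by
  obtain ⟨n, rfl⟩ : ∃ n, B = n + 1 := ⟨B - 1, (Nat.succ_pred_eq_of_pos hB).symm⟩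
  have hsub : n + 1 - 1 = n := rfl
  have hRB : R (n + 1) x x₀ = (1 / ((n+1).factorial : ℝ)) *
      ∫ u in x₀..x, gg (n + 1) u * (x - u) ^ (n + 1) := rfl
  have hRn : R (n + 1 - 1) x x₀ = (1 / (n.factorial : ℝ)) *
      ∫ u in x₀..x, gg n u * (x - u) ^ n := rfl
  have hInonneg : 0 ≤ ∫ u in x₀..x, gg n u * (x - u) ^ n := by
    refine intervalIntegral.integral_nonneg hx fun u hu => ?_
    have := hu.2
    have h1 := gg_nonneg n u
    have h2 : (0:ℝ) ≤ x - u := by linarith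
    positivity
  have hRn_nonneg : 0 ≤ R (n + 1 - 1) x x₀ := by
    rw [hRn]
    positivity
  have hfac : ((n+1).factorial : ℝ) = ((n:ℝ) + 1) * (n.factorial : ℝ) := by
    rw [Nat.factorial_succ]; push_cast; ring
  have hfacne : (n.factorial : ℝ) ≠ 0 := by positivity
  have hmain : R (n + 1) x x₀ + R (n + 1 - 1) x x₀
      = ((x / x₀ - 1) ^ (n + 1) / ((n+1).factorial : ℝ)) * Gammainc (n + 1) x₀ := by
    rw [hRB, hRn, ibp n hx₀ hx, gammainc_eq n hx₀]
    have hpow : (x / x₀ - 1) ^ (n + 1) * x₀ ^ (n + 1) = (x - x₀) ^ (n + 1) := by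
      rw [← mul_pow]
      congr 1
      field_simp
    have hpow' : ((x - x₀) / x₀) ^ (n + 1) * x₀ ^ (n + 1) = (x - x₀) ^ (n + 1) := by
      rw [← mul_pow, div_mul_cancel₀ _ hx₀.ne']
    field_simp [hfac]
    rw [hfac, mul_assoc (gg n x₀ * _), hpow']
    ring
  refine ⟨hmain, ?_⟩
  linarith [hmain, hRn_nonneg]
end

section
/- Let s be complex with 0 ≤ Re(s) ≤ 1, B ≥ 1 a natural number, and 0 < x₀ ≤ x. Then the remainder bound satisfies R_B(x,x₀) ≤ (x/x₀ - 1)^B / B. -/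
/-!
For `u ≥ x₀ > 0` the inner integral is at most the full Gamma integral,
`∫_1^∞ e^{-uy} y^B dy ≤ ∫_0^∞ e^{-uy} y^B dy = B! / u^{B+1}`, and `(x - u)^B ≤ (x - x₀)^B`.
Hence `R_B(x, x₀) ≤ (x - x₀)^B ∫_{x₀}^x u^{-(B+1)} du ≤ (x - x₀)^B / (B x₀^B)`.
-/

open MeasureTheory Real intervalIntegral

open Set
open scoped Nat

theorem integral_exp_neg_mul_mul_pow_Ioi_zero (B : ℕ) {u : ℝ} (hu : 0 < u) :
    ∫ y in Ioi (0 : ℝ), exp (-(u * y)) * y ^ B = B ! / u ^ (B + 1) := by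
  have hGamma := integral_rpow_mul_exp_neg_mul_Ioi (a := B + 1) (by positivity) hu
  rw [add_sub_cancel_right, Gamma_nat_eq_factorial, ← Nat.cast_succ] at hGamma
  simp only [rpow_natCast, one_div_pow, one_div_mul_eq_div, Nat.succ_eq_add_one] at hGamma
  rw [← hGamma]
  exact setIntegral_congr_fun measurableSet_Ioi fun _ _ => mul_comm _ _

theorem integral_exp_neg_mul_mul_pow_Ioi_nonneg (B : ℕ) (u : ℝ) {a : ℝ} (ha : 0 ≤ a) :
    0 ≤ ∫ y in Ioi a, exp (-(u * y)) * y ^ B :=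
  setIntegral_nonneg measurableSet_Ioi fun _ hy =>
    mul_nonneg (exp_pos _).le (pow_nonneg (ha.trans (le_of_lt hy)) B)

theorem integral_exp_neg_mul_mul_pow_Ioi_le (B : ℕ) {u : ℝ} (hu : 0 < u) {a : ℝ} (ha : 0 ≤ a) :
    ∫ y in Ioi a, exp (-(u * y)) * y ^ B ≤ B ! / u ^ (B + 1) := by
  rw [← integral_exp_neg_mul_mul_pow_Ioi_zero B hu]
  have hint : IntegrableOn (fun y => exp (-(u * y)) * y ^ B) (Ioi 0) :=
    Integrable.of_integral_ne_zero <| by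
      rw [integral_exp_neg_mul_mul_pow_Ioi_zero B hu]
      positivity
  refine setIntegral_mono_set hint ?_ (Ioi_subset_Ioi ha).eventuallyLE
  exact ae_restrict_of_forall_mem measurableSet_Ioi fun _ hy =>
    mul_nonneg (exp_pos _).le (pow_nonneg (le_of_lt hy) B)

theorem integral_inv_pow_succ_le {B : ℕ} (hB : B ≠ 0) {a b : ℝ} (ha : 0 < a) (hab : a ≤ b) :
    ∫ u in a..b, (u ^ (B + 1))⁻¹ ≤ (B * a ^ B)⁻¹ := by
  have h0 : (0 : ℝ) ∉ uIcc a b := by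
    rw [uIcc_of_le hab]
    exact fun h => (not_le.2 ha) h.1
  have hzpow : ∫ u in a..b, (u ^ (B + 1))⁻¹ = (a ^ B)⁻¹ / B - (b ^ B)⁻¹ / B := by
    simp_rw [← zpow_natCast, ← zpow_neg]
    rw [integral_zpow (Or.inr ⟨by omega, h0⟩)]
    have hexp : -((B + 1 : ℕ) : ℤ) + 1 = -(B : ℤ) := by push_cast; ring
    rw [hexp, zpow_neg, zpow_neg, zpow_natCast, zpow_natCast]
    push_cast
    ring
  rw [hzpow, mul_inv, ← div_eq_inv_mul]
  have : 0 ≤ (b ^ B)⁻¹ / (B : ℝ) := by have := ha.trans_le hab; positivity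
  linarith

theorem intervalIntegral.integral_mono_on_of_nonneg {f g : ℝ → ℝ} {a b : ℝ} (hab : a ≤ b)
    (hg : IntervalIntegrable g volume a b) (hf : ∀ u ∈ Ioc a b, 0 ≤ f u)
    (hfg : ∀ u ∈ Ioc a b, f u ≤ g u) : ∫ u in a..b, f u ≤ ∫ u in a..b, g u := by
  rw [integral_of_le hab, integral_of_le hab]
  exact integral_mono_of_nonneg (ae_restrict_of_forall_mem measurableSet_Ioc hf)
    ((intervalIntegrable_iff_integrableOn_Ioc_of_le hab).1 hg)
    (ae_restrict_of_forall_mem measurableSet_Ioc hfg)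

theorem integral_exp_neg_mul_mul_pow_Ioi_one_mul_pow_le (B : ℕ) {x₀ x u : ℝ} (hx₀ : 0 < x₀)
    (hxu : x₀ ≤ u) (hux : u ≤ x) :
    (∫ y in Ioi (1 : ℝ), exp (-(u * y)) * y ^ B) * (x - u) ^ B
      ≤ B ! * (x - x₀) ^ B * (u ^ (B + 1))⁻¹ := by
  have hu : 0 < u := hx₀.trans_le hxu
  calc _ ≤ B ! / u ^ (B + 1) * (x - x₀) ^ B :=
        mul_le_mul (integral_exp_neg_mul_mul_pow_Ioi_le B hu zero_le_one)
          (pow_le_pow_left₀ (sub_nonneg.2 hux) (by linarith) B)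
          (pow_nonneg (sub_nonneg.2 hux) B) (by positivity)
    _ = _ := by ring

theorem stmt_5_general (B : ℕ) (hB : 1 ≤ B)
    (x₀ x : ℝ) (hx₀ : 0 < x₀) (hx : x₀ ≤ x) :
    R B x x₀ ≤ (x / x₀ - 1) ^ B / (B : ℝ) := by
  have hinner : ∫ u in x₀..x, (∫ y in Ioi (1 : ℝ), exp (-(u * y)) * y ^ B) * (x - u) ^ B
      ≤ B ! * (x - x₀) ^ B * ∫ u in x₀..x, (u ^ (B + 1))⁻¹ := by
    rw [← intervalIntegral.integral_const_mul]
    refine integral_mono_on_of_nonneg hx ?_ (fun u hu => ?_) (fun u hu => ?_)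
    · refine (continuousOn_const.mul ((continuousOn_pow _).inv₀ fun u hu => ?_)).intervalIntegrable
      rw [uIcc_of_le hx] at hu
      exact pow_ne_zero _ (hx₀.trans_le hu.1).ne'
    · exact mul_nonneg (integral_exp_neg_mul_mul_pow_Ioi_nonneg B u zero_le_one)
        (pow_nonneg (sub_nonneg.2 hu.2) B)
    · exact integral_exp_neg_mul_mul_pow_Ioi_one_mul_pow_le B hx₀ hu.1.le hu.2
  have hpow := integral_inv_pow_succ_le (by omega : B ≠ 0) hx₀ hx
  calc R B x x₀ ≤ 1 / B ! * (B ! * (x - x₀) ^ B * (B * x₀ ^ B)⁻¹) := by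
        rw [R]
        gcongr
        exact hinner.trans (mul_le_mul_of_nonneg_left hpow (by positivity))
    _ = (x / x₀ - 1) ^ B / B := by
        rw [div_sub_one hx₀.ne', div_pow]
        field_simp

/-- For `0 ≤ Re s ≤ 1`, `B ≥ 1`, `0 < x₀ ≤ x`, the remainder bound satisfies
`R_B(x,x₀) ≤ (x/x₀ - 1)^B / B`. -/
theorem stmt_5 (s : ℂ) (hs0 : 0 ≤ s.re) (hs1 : s.re ≤ 1) (B : ℕ) (hB : 1 ≤ B)
    (x₀ x : ℝ) (hx₀ : 0 < x₀) (hx : x₀ ≤ x) :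
    R B x x₀ ≤ (x / x₀ - 1) ^ B / (B : ℝ) :=
  stmt_5_general B hB x₀ x hx₀ hx
end
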